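/- arXiv:math/0509304 — 4 statements merged into one kernel-verified Lean document; each statement's English description precedes it below -/
import Mathlib

section
/- Let $M$ be a sparse closed subgroup of a profinite group $F$. Then for each open subgroup $H$ of $F$ containing $M$ and for all $m, n \in \mathbb{N}$ there exists an open subgroup $K$ of $H$ containing $M$ such that $(F:K) \geq m$ and $(K:L) \geq n$ for every proper open subgroup $L$ of $K$ containing $M$. -/
/-- A closed subgroup `M` of a profinite group `F` is sparse if for all `m n : ℕ` there is
an open subgroup `K ≥ M` of index at least `m` such that every proper open subgroup of `K`
containing `M` has index at least `n` in `K`. -/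
def IsSparse {F : Type*} [Group F] [TopologicalSpace F] (M : Subgroup F) : Prop :=
  ∀ m n : ℕ, ∃ K : Subgroup F, IsOpen (K : Set F) ∧ M ≤ K ∧ m ≤ K.index ∧
    ∀ L : Subgroup F, IsOpen (L : Set F) → M ≤ L → L < K → n ≤ L.relIndex K

/-!
Apply sparseness with `n` replaced by `max n ((F : H) + 1)`. If the resulting `K` were not
contained in `H`, then `K ∩ H` would be a proper open subgroup of `K` containing `M` with
`(K : K ∩ H) ≤ (F : H)`, contradicting the choice of `n`.
-/

namespace Subgroup

variable {G : Type*} [Group G]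

theorem relIndex_le_index {H : Subgroup G} (hH : H.index ≠ 0) (K : Subgroup G) :
    H.relIndex K ≤ H.index := by
  simpa only [relIndex_top_right] using
    relIndex_le_of_le_right (le_top : K ≤ ⊤) (by rwa [relIndex_top_right])

theorem le_of_index_lt_relIndex_inf {H K : Subgroup G} (hH : H.index ≠ 0)
    (hK : K ⊓ H < K → H.index < (K ⊓ H).relIndex K) : K ≤ H := by
  by_contra hKH
  have hlt : K ⊓ H < K := inf_le_left.lt_of_ne fun h => hKH (h ▸ inf_le_right)
  have hbig := hK hlt
  rw [inf_comm, inf_relIndex_right] at hbig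
  exact (relIndex_le_index hH K).not_gt hbig

theorem index_ne_zero_of_isOpen [TopologicalSpace G] [SeparatelyContinuousMul G]
    [CompactSpace G] {H : Subgroup G} (hH : IsOpen (H : Set G)) : H.index ≠ 0 :=
  haveI := H.quotient_finite_of_isOpen hH
  index_ne_zero_of_finite

end Subgroup

theorem improvement_lemma_general (F : Type*) [Group F] [TopologicalSpace F] [IsTopologicalGroup F]
    [CompactSpace F]
    (M : Subgroup F) (hMsparse : IsSparse M)
    (H : Subgroup F) (hHopen : IsOpen (H : Set F)) (hMH : M ≤ H) (m n : ℕ) :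
    ∃ K : Subgroup F, IsOpen (K : Set F) ∧ M ≤ K ∧ K ≤ H ∧ m ≤ K.index ∧
      ∀ L : Subgroup F, IsOpen (L : Set F) → M ≤ L → L < K → n ≤ L.relIndex K := by
  obtain ⟨K, hKopen, hMK, hmK, hK⟩ := hMsparse m (max n (H.index + 1))
  have hKH : K ≤ H :=
    Subgroup.le_of_index_lt_relIndex_inf (Subgroup.index_ne_zero_of_isOpen hHopen) fun hlt =>
      (le_max_right _ _).trans (hK _ (hKopen.inter hHopen) (le_inf hMK hMH) hlt)
  exact ⟨K, hKopen, hMK, hKH, hmK, fun L hLopen hML hLK =>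
    (le_max_left _ _).trans (hK L hLopen hML hLK)⟩

/-- Lemma 2.2 (Improvement Lemma): if `M` is a sparse closed subgroup of a profinite group
`F`, then for each open subgroup `H ≥ M` and all `m, n` there is an open subgroup `K` of
`H` containing `M` with `(F : K) ≥ m` and `(K : L) ≥ n` for every proper open subgroup
`L < K` containing `M`. -/
theorem improvement_lemma (F : Type*) [Group F] [TopologicalSpace F] [IsTopologicalGroup F]
    [CompactSpace F] [T2Space F] [TotallyDisconnectedSpace F]
    (M : Subgroup F) (hMclosed : IsClosed (M : Set F)) (hMsparse : IsSparse M)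
    (H : Subgroup F) (hHopen : IsOpen (H : Set F)) (hMH : M ≤ H) (m n : ℕ) :
    ∃ K : Subgroup F, IsOpen (K : Set F) ∧ M ≤ K ∧ K ≤ H ∧ m ≤ K.index ∧
      ∀ L : Subgroup F, IsOpen (L : Set F) → M ≤ L → L < K → n ≤ L.relIndex K :=
  improvement_lemma_general F M hMsparse H hHopen hMH m n
end

section
/- Let $M$ be an abundant closed subgroup of a profinite group $F$. Then for each $s \in \mathbb{N}$ there exist open subgroups $E_1 \leq E$ of $F$ containing $M$ such that $(F:E) \geq s \cdot (E:E_1)!$ and $(E:E_1) \geq 3$. -/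
/-- A closed subgroup `M` of `F` of infinite index which is not sparse is abundant. -/
def IsAbundant {F : Type*} [Group F] [TopologicalSpace F] (M : Subgroup F) : Prop :=
  M.index = 0 ∧ ¬ IsSparse M

/-! Since `M` is closed of infinite index, it lies in open subgroups `E` of arbitrarily large
index. Since `M` is not sparse, from some index on every open `K ≥ M` has a proper open
subgroup `L ≥ M` with `(K : L)` bounded by a constant `n`; doing this twice below `E` gives
`E₁` with `4 ≤ (E : E₁) ≤ n²`, and it remains to take `(F : E) ≥ s · (n²)!`. -/

namespace Subgroup

variable {G : Type*} [Group G]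

lemma one_lt_relIndex_of_lt {H K : Subgroup G} [H.FiniteIndex] (h : H < K) :
    1 < H.relIndex K := by
  have h0 : H.relIndex K ≠ 0 := (isFiniteRelIndex_of_finiteIndex (K := K)).relIndex_ne_zero
  have h1 : H.relIndex K ≠ 1 := fun h1 => h.not_ge (relIndex_eq_one.mp h1)
  omega

variable [TopologicalSpace G] [IsTopologicalGroup G] [CompactSpace G]

lemma finiteIndex_of_isOpen {H : Subgroup G} (hH : IsOpen (H : Set G)) : H.FiniteIndex :=
  have := H.quotient_finite_of_isOpen hH
  finiteIndex_of_finite_quotient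

variable [TotallyDisconnectedSpace G] {M : Subgroup G}

lemma exists_isOpen_ge_notMem (hM : IsClosed (M : Set G)) {x : G} (hx : x ∉ M) :
    ∃ N : Subgroup G, IsOpen (N : Set G) ∧ M ≤ N ∧ x ∉ N := by
  have hMeq : M = sInf {N : Subgroup G | IsOpen (N : Set G) ∧ M ≤ N} :=
    ProfiniteGrp.closedSubgroup_eq_sInf_open ⟨M, hM⟩
  rw [hMeq, mem_sInf] at hx
  push Not at hx
  obtain ⟨N, ⟨hN, hMN⟩, hxN⟩ := hx
  exact ⟨N, hN, hMN, hxN⟩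

lemma exists_isOpen_ge_lt_of_index_eq_zero (hM : IsClosed (M : Set G)) (hM0 : M.index = 0)
    {K : Subgroup G} (hK : IsOpen (K : Set G)) (hMK : M ≤ K) :
    ∃ L : Subgroup G, IsOpen (L : Set G) ∧ M ≤ L ∧ L < K := by
  have hKM : ¬ K ≤ M := fun hKM =>
    (finiteIndex_of_isOpen hK).index_ne_zero (by simpa [hM0] using index_dvd_of_le hKM)
  obtain ⟨x, hxK, hxM⟩ := SetLike.not_le_iff_exists.mp hKM
  obtain ⟨N, hN, hMN, hxN⟩ := exists_isOpen_ge_notMem hM hxM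
  exact ⟨K ⊓ N, hK.inter hN, le_inf hMK hMN,
    inf_le_left.lt_of_not_ge fun hK' => hxN (mem_inf.mp (hK' hxK)).2⟩

lemma exists_isOpen_ge_le_index (hM : IsClosed (M : Set G)) (hM0 : M.index = 0) (n : ℕ) :
    ∃ K : Subgroup G, IsOpen (K : Set G) ∧ M ≤ K ∧ n ≤ K.index := by
  induction n with
  | zero => exact ⟨⊤, isOpen_univ, le_top, Nat.zero_le _⟩
  | succ n ih =>
    obtain ⟨K, hK, hMK, hnK⟩ := ih
    obtain ⟨L, hL, hML, hLK⟩ := exists_isOpen_ge_lt_of_index_eq_zero hM hM0 hK hMK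
    have := finiteIndex_of_isOpen hL
    exact ⟨L, hL, hML, hnK.trans_lt (index_strictAnti hLK)⟩

end Subgroup

section NotSparse

open Subgroup

variable {G : Type*} [Group G] [TopologicalSpace G] {M : Subgroup G}

lemma exists_forall_exists_lt_of_not_isSparse (h : ¬ IsSparse M) :
    ∃ m n : ℕ, ∀ K : Subgroup G, IsOpen (K : Set G) → M ≤ K → m ≤ K.index →
      ∃ L : Subgroup G, IsOpen (L : Set G) ∧ M ≤ L ∧ L < K ∧ L.relIndex K < n := by
  simpa [IsSparse] using h

lemma exists_isOpen_ge_relIndex_mem_Icc [IsTopologicalGroup G] [CompactSpace G] {m n : ℕ}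
    (hstep : ∀ K : Subgroup G, IsOpen (K : Set G) → M ≤ K → m ≤ K.index →
      ∃ L : Subgroup G, IsOpen (L : Set G) ∧ M ≤ L ∧ L < K ∧ L.relIndex K < n)
    {K : Subgroup G} (hK : IsOpen (K : Set G)) (hMK : M ≤ K) (hmK : m ≤ K.index) :
    ∃ L : Subgroup G, IsOpen (L : Set G) ∧ M ≤ L ∧ L ≤ K ∧ L.relIndex K ∈ Set.Icc 4 (n * n) := by
  obtain ⟨L₁, hL₁, hML₁, hL₁K, hn₁⟩ := hstep K hK hMK hmK
  have := finiteIndex_of_isOpen hL₁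
  obtain ⟨L₂, hL₂, hML₂, hL₂L₁, hn₂⟩ := hstep L₁ hL₁ hML₁ (hmK.trans (index_antitone hL₁K.le))
  have := finiteIndex_of_isOpen hL₂
  have h₁ := one_lt_relIndex_of_lt hL₁K
  have h₂ := one_lt_relIndex_of_lt hL₂L₁
  refine ⟨L₂, hL₂, hML₂, hL₂L₁.le.trans hL₁K.le, ?_⟩
  rw [← relIndex_mul_relIndex L₂ L₁ K hL₂L₁.le hL₁K.le]
  exact ⟨Nat.mul_le_mul h₂ h₁, Nat.mul_le_mul hn₂.le hn₁.le⟩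

end NotSparse

theorem abundant_subgroup_lemma_general (F : Type*) [Group F] [TopologicalSpace F]
    [IsTopologicalGroup F] [CompactSpace F] [TotallyDisconnectedSpace F]
    (M : Subgroup F) (hMclosed : IsClosed (M : Set F)) (hMabundant : IsAbundant M)
    (s : ℕ) :
    ∃ E E₁ : Subgroup F, IsOpen (E : Set F) ∧ IsOpen (E₁ : Set F) ∧ E₁ ≤ E ∧ M ≤ E₁ ∧
      s * Nat.factorial (E₁.relIndex E) ≤ E.index ∧ 3 ≤ E₁.relIndex E := by
  obtain ⟨hM0, hMsparse⟩ := hMabundant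
  obtain ⟨m, n, hstep⟩ := exists_forall_exists_lt_of_not_isSparse hMsparse
  obtain ⟨E, hE, hME, hEindex⟩ :=
    Subgroup.exists_isOpen_ge_le_index hMclosed hM0 (max m (s * (n * n).factorial))
  obtain ⟨E₁, hE₁, hME₁, hE₁E, hlow, hhigh⟩ :=
    exists_isOpen_ge_relIndex_mem_Icc hstep hE hME (le_of_max_le_left hEindex)
  refine ⟨E, E₁, hE, hE₁, hE₁E, hME₁, ?_, by omega⟩
  calc s * (E₁.relIndex E).factorial ≤ s * (n * n).factorial := by gcongr
    _ ≤ E.index := le_of_max_le_right hEindex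

/-- Lemma 2.5: if `M` is an abundant closed subgroup of a profinite group `F`, then for
each `s ∈ ℕ` there are open subgroups `E₁ ≤ E` of `F` containing `M` with
`(F : E) ≥ s · (E : E₁)!` and `(E : E₁) ≥ 3`. -/
theorem abundant_subgroup_lemma (F : Type*) [Group F] [TopologicalSpace F]
    [IsTopologicalGroup F] [CompactSpace F] [T2Space F] [TotallyDisconnectedSpace F]
    (M : Subgroup F) (hMclosed : IsClosed (M : Set F)) (hMabundant : IsAbundant M)
    (s : ℕ) :
    ∃ E E₁ : Subgroup F, IsOpen (E : Set F) ∧ IsOpen (E₁ : Set F) ∧ E₁ ≤ E ∧ M ≤ E₁ ∧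
      s * Nat.factorial (E₁.relIndex E) ≤ E.index ∧ 3 ≤ E₁.relIndex E :=
  abundant_subgroup_lemma_general F M hMclosed hMabundant s
end

section
/- Let $F = \prod_p \mathbb{Z}/p\mathbb{Z}$, the direct product over all prime numbers $p$ of the cyclic groups of order $p$, regarded as a profinite group. Then the trivial subgroup $\{1\}$ is sparse in $F$. -/
namespace Subgroup

variable {ι : Type*} {G : ι → Type*} [∀ i, Group (G i)]

lemma index_pi_bot [∀ i, Finite (G i)] (s : Finset ι) :
    (pi (s : Set ι) fun i => (⊥ : Subgroup (G i))).index = ∏ i ∈ s, Nat.card (G i) := by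
  classical
  let restrict : (∀ i, G i) →* ∀ i : s, G i := MonoidHom.pi fun i => Pi.evalMonoidHom G i
  have hker : restrict.ker = pi (s : Set ι) fun _ => ⊥ := by
    ext x
    simp [restrict, mem_pi, funext_iff]
  have hsurj : Function.Surjective restrict := fun y =>
    ⟨fun i => if h : i ∈ s then y ⟨i, h⟩ else 1, funext fun i => by simp [restrict, i.2]⟩
  rw [← hker, index_ker, MonoidHom.range_eq_top.mpr hsurj, Nat.card_congr topEquiv.toEquiv,
    Nat.card_pi, Finset.prod_coe_sort s fun i => Nat.card (G i)]

lemma relIndex_pi_bot_union [DecidableEq ι] [∀ i, Finite (G i)] (s t : Finset ι) :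
    (pi (↑(s ∪ t) : Set ι) fun i => (⊥ : Subgroup (G i))).relIndex
        (pi (s : Set ι) fun _ => ⊥) = ∏ i ∈ t \ s, Nat.card (G i) := by
  have hle : (pi (↑(s ∪ t) : Set ι) fun i => (⊥ : Subgroup (G i))) ≤
      pi (s : Set ι) fun _ => ⊥ :=
    fun x hx i hi => hx i (Finset.mem_union_left t hi)
  have hs : (pi (s : Set ι) fun i => (⊥ : Subgroup (G i))).index ≠ 0 := by
    rw [index_pi_bot]
    exact Finset.prod_ne_zero_iff.mpr fun i _ => Nat.card_pos.ne'
  apply Nat.eq_of_mul_eq_mul_right (Nat.pos_of_ne_zero hs)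
  rw [relIndex_mul_index hle, index_pi_bot, index_pi_bot, Finset.union_comm,
    ← Finset.sdiff_union_self_eq_union,
    Finset.prod_union Finset.sdiff_disjoint]

variable [∀ i, TopologicalSpace (G i)]

lemma isOpen_pi_bot [∀ i, DiscreteTopology (G i)] (s : Finset ι) :
    IsOpen ((pi (s : Set ι) fun i => (⊥ : Subgroup (G i))) : Set (∀ i, G i)) :=
  isOpen_set_pi s.finite_toSet fun _ _ => isOpen_discrete _

lemma exists_pi_bot_le_of_isOpen {L : Subgroup (∀ i, G i)} (hL : IsOpen (L : Set (∀ i, G i))) :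
    ∃ T : Finset ι, (pi (T : Set ι) fun _ => ⊥) ≤ L := by
  obtain ⟨T, u, hu, hTu⟩ := isOpen_pi_iff.mp hL 1 L.one_mem
  refine ⟨T, fun x hx => hTu fun i hi => ?_⟩
  rw [show x i = 1 from hx i hi]
  exact (hu i hi).2

lemma exists_relIndex_pi_bot_dvd_prod_card [DecidableEq ι] [∀ i, Finite (G i)] {s : Finset ι}
    {L : Subgroup (∀ i, G i)} (hL : IsOpen (L : Set (∀ i, G i))) :
    ∃ T : Finset ι, Disjoint T s ∧
      L.relIndex (pi (s : Set ι) fun _ => ⊥) ∣ ∏ i ∈ T, Nat.card (G i) := by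
  obtain ⟨T, hTL⟩ := exists_pi_bot_le_of_isOpen hL
  refine ⟨T \ s, Finset.sdiff_disjoint, ?_⟩
  rw [← relIndex_pi_bot_union]
  exact relIndex_dvd_of_le_left _ fun x hx => hTL fun i hi => hx i (Finset.mem_union_right s hi)

end Subgroup

lemma le_of_dvd_prod_primes {n d : ℕ} {T : Finset Nat.Primes} (hT : ∀ p ∈ T, n ≤ (p : ℕ))
    (hd : d ∣ ∏ p ∈ T, (p : ℕ)) (hd1 : d ≠ 1) : n ≤ d := by
  have hd0 : 0 < d := Nat.pos_of_dvd_of_pos hd (Finset.prod_pos fun p _ => p.2.pos)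
  obtain ⟨p, hpT, hp⟩ :=
    (Nat.minFac_prime hd1).prime.exists_mem_finset_dvd ((Nat.minFac_dvd d).trans hd)
  calc n ≤ p := hT p hpT
    _ = d.minFac := ((Nat.prime_dvd_prime_iff_eq (Nat.minFac_prime hd1) p.2).mp hp).symm
    _ ≤ d := Nat.minFac_le hd0

/-- In `F = ∏_p ℤ/pℤ`, the product over all primes `p` of the cyclic groups of order
`p` (a profinite group with the product topology), the trivial subgroup is sparse. -/
theorem trivial_subgroup_sparse_in_prod_zmod :
    IsSparse (⊥ : Subgroup (∀ p : Nat.Primes, Multiplicative (ZMod p))) := by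
  intro m n
  obtain ⟨p, hpm, hp⟩ := Nat.exists_infinite_primes m
  let s : Finset Nat.Primes := insert ⟨p, hp⟩ ((Nat.primesBelow n).subtype Nat.Prime)
  have (q : Nat.Primes) : NeZero (q : ℕ) := ⟨q.2.ne_zero⟩
  have hcard (q : Nat.Primes) : Nat.card (Multiplicative (ZMod q)) = q := Nat.card_zmod q
  refine ⟨Subgroup.pi (s : Set Nat.Primes) fun _ => ⊥, Subgroup.isOpen_pi_bot s, bot_le, ?_,
    ?_⟩
  · rw [Subgroup.index_pi_bot]
    simp only [hcard]
    calc m ≤ p := hpm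
      _ ≤ ∏ q ∈ s, (q : ℕ) :=
        Finset.single_le_prod' (fun q _ => q.2.one_le)
          (Finset.mem_insert_self (⟨p, hp⟩ : Nat.Primes) _)
  · intro L hL _ hLK
    obtain ⟨T, hTs, hdvd⟩ := Subgroup.exists_relIndex_pi_bot_dvd_prod_card (s := s) hL
    simp only [hcard] at hdvd
    refine le_of_dvd_prod_primes (fun q hq => ?_) hdvd
      fun h => hLK.not_ge (Subgroup.relIndex_eq_one.mp h)
    by_contra! hqn
    exact Finset.disjoint_left.mp hTs hq
      (Finset.mem_insert_of_mem (Finset.mem_subtype.mpr (Nat.mem_primesBelow.mpr ⟨hqn, q.2⟩)))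
end

section
/- Let $\mathcal{C}$ be a Melnikov formation of finite groups, let $\hat F$ be a free profinite group of finite rank $e \geq 2$, and let $\hat N = M_{\hat F}(\mathcal{C})$ be the intersection of all open normal subgroups $K$ of $\hat F$ with $\hat F / K \in \mathcal{C}$. Let $\hat M$ be a closed subgroup of $\hat F$ containing $\hat N$ such that $\hat M / \hat N$ is a pro-$\mathcal{C}$ group. Then $\hat N = M_{\hat M}(\mathcal{C})$, i.e., $\hat N$ equals the intersection of all open normal subgroups $L$ of $\hat M$ with $\hat M / L \in \mathcal{C}$. -/
/-- A Melnikov formation: a family of finite groups closed under taking quotients,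
normal subgroups, and extensions. -/
structure MelnikovFormation where
  /-- membership of a (finite) group in the family -/
  mem : ∀ (G : Type) [Group G], Prop
  finite_of_mem : ∀ (G : Type) [Group G], mem G → Finite G
  iso_closed : ∀ (G H : Type) [Group G] [Group H], (G ≃* H) → mem G → mem H
  quotient_closed : ∀ (G : Type) [Group G] (N : Subgroup G) [N.Normal],
    mem G → mem (G ⧸ N)
  normal_closed : ∀ (G : Type) [Group G] (N : Subgroup G) [N.Normal],
    mem G → mem N
  extension_closed : ∀ (G : Type) [Group G] (N : Subgroup G) [N.Normal],
    mem N → mem (G ⧸ N) → mem G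

/-- A topological group is a pro-`𝓒` group if it is profinite and all of its quotients by
open normal subgroups lie in `𝓒`. -/
def IsProC (𝓒 : MelnikovFormation) (G : Type) [Group G] [TopologicalSpace G] : Prop :=
  (CompactSpace G ∧ T2Space G ∧ TotallyDisconnectedSpace G ∧ IsTopologicalGroup G) ∧
  ∀ (U : Subgroup G) [U.Normal], IsOpen (U : Set G) → 𝓒.mem (G ⧸ U)

/-- `F` is a free pro-`𝓒` group of finite rank `e`. -/
def IsFreeProCOfRank (𝓒 : MelnikovFormation) (F : Type) [Group F] [TopologicalSpace F]
    (e : ℕ) : Prop :=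
  IsProC 𝓒 F ∧
  ∃ x : Fin e → F,
    closure (Subgroup.closure (Set.range x) : Set F) = Set.univ ∧
    ∀ (H : Type) [Group H], 𝓒.mem H → ∀ f : Fin e → H,
      ∃! φ : F →* H, @Continuous F H _ ⊥ (φ : F → H) ∧ ∀ i, φ (x i) = f i

/-- `F` is a free pro-`𝓒` group of countably infinite rank `ω`. -/
def IsFreeProCCountableRank (𝓒 : MelnikovFormation) (F : Type) [Group F]
    [TopologicalSpace F] : Prop :=
  IsProC 𝓒 F ∧
  ∃ x : ℕ → F,
    Filter.Tendsto x Filter.atTop (nhds 1) ∧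
    closure (Subgroup.closure (Set.range x) : Set F) = Set.univ ∧
    ∀ (H : Type) [Group H], 𝓒.mem H → ∀ f : ℕ → H,
      (∀ᶠ n in Filter.atTop, f n = 1) →
      ∃! φ : F →* H, @Continuous F H _ ⊥ (φ : F → H) ∧ ∀ n, φ (x n) = f n

/-- `M_G(𝓒)`: the intersection of all open normal subgroups `K` of `G` with `G/K ∈ 𝓒`. -/
def formationKernel (𝓒 : MelnikovFormation) (G : Type) [Group G] [TopologicalSpace G] :
    Subgroup G :=
  ⨅ (K : Subgroup G) (h : K.Normal) (_ : IsOpen (K : Set G))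
    (_ : letI := h; 𝓒.mem (G ⧸ K)), K

/-- `F` is a free profinite group of finite rank `e`. -/
def IsFreeProfiniteOfRank (F : Type) [Group F] [TopologicalSpace F] (e : ℕ) : Prop :=
  CompactSpace F ∧ T2Space F ∧ TotallyDisconnectedSpace F ∧ IsTopologicalGroup F ∧
    ∃ x : Fin e → F,
      closure (Subgroup.closure (Set.range x) : Set F) = Set.univ ∧
      ∀ (H : Type) [Group H] [Finite H] (f : Fin e → H),
        ∃! φ : F →* H, @Continuous F H _ ⊥ (φ : F → H) ∧ ∀ i, φ (x i) = f i

/-!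
Write `N = M_F(𝓒)`. As `F` is compact, an open normal subgroup of `F` (or of `N`) containing the
formation kernel already has its quotient in `𝓒`. The key point is `M_N(𝓒) = N`: the subgroup
`P = M_N(𝓒)` is characteristic and closed in `N`, hence normal and closed in `F`, and for every
open normal `W ⊇ P` of `F` the quotient `F/W` is an extension of `F/NW` by `N/(N ∩ W)`, both in
`𝓒`; so `N ≤ W` for all such `W`, whence `N ≤ P`. Now if `L` is open normal in `M` with
`M/L ∈ 𝓒`, then `N/(N ∩ L)` is a normal subgroup of `M/L`, so `N ≤ L`; and since `M/N` is
pro-`𝓒`, `M_M(𝓒) ≤ N`.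
-/

namespace MelnikovFormation

variable (𝓒 : MelnikovFormation)

section Algebra

variable {G H : Type} [Group G] [Group H]

theorem mem_of_subsingleton [Subsingleton H] (hG : 𝓒.mem G) : 𝓒.mem H :=
  have := QuotientGroup.subsingleton_quotient_top (G := G)
  𝓒.iso_closed _ _ (@MulEquiv.ofUnique _ _ (uniqueOfSubsingleton 1) (uniqueOfSubsingleton 1) _ _)
    (𝓒.quotient_closed G ⊤ hG)

theorem mem_quotient_of_le {A B : Subgroup G} [A.Normal] [B.Normal] (hAB : A ≤ B)
    (hA : 𝓒.mem (G ⧸ A)) : 𝓒.mem (G ⧸ B) :=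
  have : (B.map (QuotientGroup.mk' A)).Normal := .map ‹_› _ (QuotientGroup.mk'_surjective A)
  𝓒.iso_closed _ _ (QuotientGroup.quotientQuotientEquivQuotient A B hAB)
    (𝓒.quotient_closed _ _ hA)

noncomputable def quotientComapEquivRange (φ : H →* G) (W : Subgroup G) [W.Normal] :
    H ⧸ W.comap φ ≃* ((QuotientGroup.mk' W).comp φ).range :=
  (QuotientGroup.quotientMulEquivOfEq (by rw [← MonoidHom.comap_ker, QuotientGroup.ker_mk'])).trans
    (QuotientGroup.quotientKerEquivRange _)

theorem mem_quotient_comap (φ : H →* G) [φ.range.Normal] {W : Subgroup G} [W.Normal]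
    (hW : 𝓒.mem (G ⧸ W)) : 𝓒.mem (H ⧸ W.comap φ) := by
  have : ((QuotientGroup.mk' W).comp φ).range.Normal := by
    rw [MonoidHom.range_comp]; exact .map ‹_› _ (QuotientGroup.mk'_surjective W)
  exact 𝓒.iso_closed _ _ (quotientComapEquivRange φ W).symm (𝓒.normal_closed _ _ hW)

theorem mem_quotient_of_mem_quotient_sup {N W : Subgroup G} [N.Normal] [W.Normal]
    (hN : 𝓒.mem (N ⧸ W.subgroupOf N)) (hsup : 𝓒.mem (G ⧸ (N ⊔ W))) : 𝓒.mem (G ⧸ W) := by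
  have hrange :
      ((QuotientGroup.mk' W).comp N.subtype).range = (N ⊔ W).map (QuotientGroup.mk' W) := by
    rw [MonoidHom.range_comp, Subgroup.range_subtype, Subgroup.map_sup,
      (Subgroup.map_eq_bot_iff _).2 (QuotientGroup.ker_mk' W).ge, sup_bot_eq]
  have : ((N ⊔ W).map (QuotientGroup.mk' W)).Normal :=
    .map inferInstance _ (QuotientGroup.mk'_surjective W)
  -- `G ⧸ W` is an extension of `G ⧸ (N ⊔ W)` by `(N ⊔ W) ⧸ W ≃* N ⧸ (N ⊓ W)`
  refine 𝓒.extension_closed (G ⧸ W) ((N ⊔ W).map (QuotientGroup.mk' W)) ?_ ?_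
  · exact 𝓒.iso_closed _ _ ((quotientComapEquivRange N.subtype W).trans
      (MulEquiv.subgroupCongr hrange)) hN
  · exact 𝓒.iso_closed _ _
      (QuotientGroup.quotientQuotientEquivQuotient W (N ⊔ W) le_sup_right).symm hsup

theorem mem_quotient_inf {A B : Subgroup G} [A.Normal] [B.Normal]
    (hA : 𝓒.mem (G ⧸ A)) (hB : 𝓒.mem (G ⧸ B)) : 𝓒.mem (G ⧸ (A ⊓ B)) := by
  have : A.subtype.range.Normal := by rwa [Subgroup.range_subtype]
  refine 𝓒.mem_quotient_of_mem_quotient_sup (N := A) ?_ (𝓒.mem_quotient_of_le le_sup_left hA)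
  exact 𝓒.iso_closed _ _ (QuotientGroup.quotientMulEquivOfEq (B.inf_subgroupOf_left A).symm)
    (𝓒.mem_quotient_comap A.subtype hB)

end Algebra

section Topology

variable {G H : Type} [Group G] [TopologicalSpace G] [Group H] [TopologicalSpace H]

theorem mem_formationKernel_iff {x : G} :
    x ∈ formationKernel 𝓒 G ↔ ∀ (K : Subgroup G) (h : K.Normal), IsOpen (K : Set G) →
      (letI := h; 𝓒.mem (G ⧸ K)) → x ∈ K := by
  simp only [formationKernel, Subgroup.mem_iInf]

theorem formationKernel_le {K : Subgroup G} [K.Normal] (hK : IsOpen (K : Set G))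
    (hmem : 𝓒.mem (G ⧸ K)) : formationKernel 𝓒 G ≤ K :=
  fun _ hx ↦ 𝓒.mem_formationKernel_iff.1 hx K ‹_› hK hmem

instance formationKernel_normal : (formationKernel 𝓒 G).Normal :=
  ⟨fun _ hn g ↦ 𝓒.mem_formationKernel_iff.2 fun K hK hKo hmem ↦
    hK.conj_mem _ (𝓒.mem_formationKernel_iff.1 hn K hK hKo hmem) g⟩

theorem isClosed_formationKernel [SeparatelyContinuousMul G] :
    IsClosed (formationKernel 𝓒 G : Set G) := by
  simp only [formationKernel, Subgroup.coe_iInf]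
  exact isClosed_iInter fun K ↦ isClosed_iInter fun _ ↦ isClosed_iInter fun hK ↦
    isClosed_iInter fun _ ↦ K.isClosed_of_isOpen hK

theorem formationKernel_le_comap (φ : H →* G) (hφ : Continuous φ) [φ.range.Normal] :
    formationKernel 𝓒 H ≤ (formationKernel 𝓒 G).comap φ := fun _ hx ↦
  𝓒.mem_formationKernel_iff.2 fun _ _ hKo hmem ↦
    𝓒.formationKernel_le (hKo.preimage hφ) (𝓒.mem_quotient_comap φ hmem) hx

theorem map_subtype_formationKernel_normal [ContinuousMul G] (N : Subgroup G) [N.Normal] :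
    ((formationKernel 𝓒 N).map N.subtype).Normal := by
  refine ⟨?_⟩
  rintro _ ⟨y, hy, rfl⟩ g
  let c : N ≃* N := MulAut.conjNormal g
  have hc : Continuous c := by
    refine continuous_induced_rng.2 ?_
    have : (Subtype.val ∘ c) = fun y : N ↦ g * y * g⁻¹ := funext (MulAut.conjNormal_apply g)
    rw [this]
    fun_prop
  have : c.toMonoidHom.range.Normal := by
    rw [c.toMonoidHom.range_eq_top_of_surjective c.surjective]; infer_instance
  exact ⟨c y, 𝓒.formationKernel_le_comap c.toMonoidHom hc hy, MulAut.conjNormal_apply g y⟩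

theorem mem_quotient_of_formationKernel_le [CompactSpace G] [SeparatelyContinuousMul G]
    (htriv : 𝓒.mem PUnit) {V : Subgroup G} [V.Normal] (hV : IsOpen (V : Set G))
    (hle : formationKernel 𝓒 G ≤ V) : 𝓒.mem (G ⧸ V) := by
  let ι := {K : Subgroup G // ∃ h : K.Normal, IsOpen (K : Set G) ∧ (letI := h; 𝓒.mem (G ⧸ K))}
  have : Nonempty ι := ⟨⊤, inferInstance, isOpen_univ,
    have := QuotientGroup.subsingleton_quotient_top (G := G); 𝓒.mem_of_subsingleton htriv⟩
  have hdir : Directed (· ⊇ ·) fun K : ι ↦ (K.1 : Set G) := by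
    rintro ⟨A, hA, hAo, hAmem⟩ ⟨B, hB, hBo, hBmem⟩
    exact ⟨⟨A ⊓ B, inferInstance, hAo.inter hBo, 𝓒.mem_quotient_inf hAmem hBmem⟩,
      inf_le_left, inf_le_right⟩
  have hinter : ∀ x ∈ ⋂ K : ι, (K.1 : Set G), x ∈ formationKernel 𝓒 G := fun x hx ↦
    𝓒.mem_formationKernel_iff.2 fun K hK hKo hmem ↦ Set.mem_iInter.1 hx ⟨K, hK, hKo, hmem⟩
  obtain ⟨⟨K, hK, _, hmem⟩, hKV⟩ := exists_subset_nhds_of_compactSpace hdir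
    (fun K ↦ K.1.isClosed_of_isOpen K.2.2.1) fun x hx ↦ hV.mem_nhds (hle (hinter x hx))
  exact 𝓒.mem_quotient_of_le hKV hmem

theorem exists_isOpen_normal_le_notMem [CompactSpace G] [TotallyDisconnectedSpace G]
    [IsTopologicalGroup G] {P : Subgroup G} [P.Normal] (hP : IsClosed (P : Set G)) {g : G}
    (hg : g ∉ P) : ∃ W : Subgroup G, W.Normal ∧ IsOpen (W : Set G) ∧ P ≤ W ∧ g ∉ W := by
  rw [show P = _ from ProfiniteGrp.closedSubgroup_eq_sInf_open ⟨P, hP⟩, Subgroup.mem_sInf] at hg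
  push Not at hg
  obtain ⟨K, ⟨hKo, hPK⟩, hgK⟩ := hg
  have := Subgroup.quotient_finite_of_isOpen K hKo
  have := K.finiteIndex_of_finite_quotient
  have hWo := K.normalCore.isOpen_of_isClosed_of_finiteIndex
    (K.normalCore_isClosed (K.isClosed_of_isOpen hKo))
  exact ⟨K.normalCore, inferInstance, hWo, Subgroup.normal_le_normalCore.2 hPK,
    fun h ↦ hgK (K.normalCore_le h)⟩

theorem formationKernel_eq_bot_of_isProC (hG : IsProC 𝓒 G) : formationKernel 𝓒 G = ⊥ := by
  obtain ⟨⟨_, _, _, _⟩, hmem⟩ := hG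
  refine eq_bot_iff.2 fun x hx ↦ ?_
  by_contra hx1
  obtain ⟨W, hW, hWo, -, hxW⟩ := exists_isOpen_normal_le_notMem
    (by rw [Subgroup.coe_bot]; exact isClosed_singleton) hx1
  exact hxW (𝓒.formationKernel_le hWo (hmem W hWo) hx)

theorem formationKernel_le_of_isProC {K : Subgroup G} [K.Normal] (hK : IsProC 𝓒 (G ⧸ K)) :
    formationKernel 𝓒 G ≤ K := by
  have : (QuotientGroup.mk' K).range.Normal := by
    rw [(QuotientGroup.mk' K).range_eq_top_of_surjective (QuotientGroup.mk'_surjective K)]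
    infer_instance
  simpa [𝓒.formationKernel_eq_bot_of_isProC hK] using
    𝓒.formationKernel_le_comap (QuotientGroup.mk' K) QuotientGroup.continuous_mk

theorem mem_punit_of_isProC (hG : IsProC 𝓒 G) : 𝓒.mem PUnit :=
  have := QuotientGroup.subsingleton_quotient_top (G := G)
  𝓒.mem_of_subsingleton (hG.2 ⊤ isOpen_univ)

theorem mem_quotient_of_map_formationKernel_le [CompactSpace G] [IsTopologicalGroup G]
    (htriv : 𝓒.mem PUnit) {W : Subgroup G} [W.Normal] (hW : IsOpen (W : Set G))
    (hle : (formationKernel 𝓒 (formationKernel 𝓒 G)).map (formationKernel 𝓒 G).subtype ≤ W) :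
    𝓒.mem (G ⧸ W) := by
  have : CompactSpace (formationKernel 𝓒 G) :=
    isCompact_iff_compactSpace.1 𝓒.isClosed_formationKernel.isCompact
  refine 𝓒.mem_quotient_of_mem_quotient_sup (N := formationKernel 𝓒 G) ?_ ?_
  · exact 𝓒.mem_quotient_of_formationKernel_le htriv (hW.preimage continuous_subtype_val)
      fun y hy ↦ hle ⟨y, hy, rfl⟩
  · exact 𝓒.mem_quotient_of_formationKernel_le htriv (Subgroup.isOpen_mono le_sup_right hW)
      le_sup_left

theorem formationKernel_formationKernel [CompactSpace G] [TotallyDisconnectedSpace G]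
    [IsTopologicalGroup G] (htriv : 𝓒.mem PUnit) :
    formationKernel 𝓒 (formationKernel 𝓒 G) = ⊤ := by
  set N := formationKernel 𝓒 G
  set P := (formationKernel 𝓒 N).map N.subtype
  have : P.Normal := 𝓒.map_subtype_formationKernel_normal N
  have hP : IsClosed (P : Set G) :=
    𝓒.isClosed_formationKernel.isClosedEmbedding_subtypeVal.isClosedMap _
      (𝓒.isClosed_formationKernel (G := N))
  refine eq_top_iff.2 fun x _ ↦ ?_
  by_contra hx
  obtain ⟨W, hW, hWo, hPW, hxW⟩ := exists_isOpen_normal_le_notMem hP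
    ((Subgroup.mem_map_iff_mem N.subtype_injective).not.2 hx)
  exact hxW (𝓒.formationKernel_le hWo (𝓒.mem_quotient_of_map_formationKernel_le htriv hWo hPW)
    x.2)

end Topology

end MelnikovFormation

theorem formationKernel_of_subgroup_general (𝓒 : MelnikovFormation)
    (F : Type) [Group F] [TopologicalSpace F]
    (e : ℕ) (hF : IsFreeProfiniteOfRank F e)
    (M : Subgroup F) (hMclosed : IsClosed (M : Set F))
    (hNM : formationKernel 𝓒 F ≤ M)
    [hnorm : ((formationKernel 𝓒 F).subgroupOf M).Normal]
    (hquot : IsProC 𝓒 (↥M ⧸ (formationKernel 𝓒 F).subgroupOf M)) :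
    (formationKernel 𝓒 F).subgroupOf M = formationKernel 𝓒 ↥M := by
  obtain ⟨_, _, _, _, -⟩ := hF
  have : CompactSpace M := isCompact_iff_compactSpace.1 hMclosed.isCompact
  refine le_antisymm ?_ (𝓒.formationKernel_le_of_isProC hquot)
  have : (Subgroup.inclusion hNM).range.Normal := by rwa [Subgroup.inclusion_range]
  rw [← Subgroup.inclusion_range hNM, MonoidHom.range_eq_map, Subgroup.map_le_iff_le_comap,
    ← 𝓒.formationKernel_formationKernel (𝓒.mem_punit_of_isProC hquot)]
  exact 𝓒.formationKernel_le_comap _ (continuous_inclusion hNM)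

/-- The key step of Theorem 3.1: let `F̂` be a free profinite group of finite rank
`e ≥ 2`, `N̂ = M_F̂(𝓒)`, and `M̂` a closed subgroup of `F̂` containing `N̂` such that
`M̂/N̂` is a pro-`𝓒` group. Then `N̂ = M_M̂(𝓒)`. -/
theorem formationKernel_of_subgroup (𝓒 : MelnikovFormation)
    (F : Type) [Group F] [TopologicalSpace F]
    (e : ℕ) (he : 2 ≤ e) (hF : IsFreeProfiniteOfRank F e)
    (M : Subgroup F) (hMclosed : IsClosed (M : Set F))
    (hNM : formationKernel 𝓒 F ≤ M)
    [hnorm : ((formationKernel 𝓒 F).subgroupOf M).Normal]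
    (hquot : IsProC 𝓒 (↥M ⧸ (formationKernel 𝓒 F).subgroupOf M)) :
    (formationKernel 𝓒 F).subgroupOf M = formationKernel 𝓒 ↥M :=
  formationKernel_of_subgroup_general 𝓒 F e hF M hMclosed hNM (hnorm := hnorm) hquot
end
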